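/- arXiv:1406.7435 — 4 statements merged into one kernel-verified Lean document; each statement's English description precedes it below -/
import Mathlib

section
/- For any fixed permutation π ∈ Sₙ, if σ is chosen uniformly at random from Sₙ, then the expected inversion-ℓ₁ distance satisfies E[d_{x,ℓ₁}(π,σ)] > n(n−1)/8, and its variance satisfies Var[d_{x,ℓ₁}(π,σ)] < (n+1)(n+2)(2n+3)/6. -/
open Finset

/-- Kendall tau distance: number of discordant pairs. -/
def dtau {n : ℕ} (σ₁ σ₂ : Equiv.Perm (Fin n)) : ℕ :=
  (Finset.univ.filter (fun p : Fin n × Fin n =>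
    p.1 < p.2 ∧ ¬((σ₁ p.1 < σ₁ p.2) ↔ (σ₂ p.1 < σ₂ p.2)))).card

/-- Spearman's footrule (ℓ₁ distance of permutation vectors). -/
def dl1 {n : ℕ} (σ₁ σ₂ : Equiv.Perm (Fin n)) : ℕ :=
  ∑ i : Fin n, ((σ₁ i : ℤ) - (σ₂ i : ℤ)).natAbs

/-- Chebyshev (ℓ∞) distance of permutation vectors. -/
def dlinf {n : ℕ} (σ₁ σ₂ : Equiv.Perm (Fin n)) : ℕ :=
  Finset.univ.sup (fun i : Fin n => ((σ₁ i : ℤ) - (σ₂ i : ℤ)).natAbs)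

/-- Inversion vector: `invVec σ i` counts `j < i` with `σ⁻¹ j > σ⁻¹ i`
(elements as `Fin n`; coordinate 0 is always 0). -/
def invVec {n : ℕ} (σ : Equiv.Perm (Fin n)) (i : Fin n) : ℕ :=
  (Finset.univ.filter (fun j : Fin n => j < i ∧ σ⁻¹ i < σ⁻¹ j)).card

/-- Inversion-ℓ₁ distance: ℓ₁ distance between inversion vectors. -/
def dinv {n : ℕ} (σ₁ σ₂ : Equiv.Perm (Fin n)) : ℕ :=
  ∑ i : Fin n, ((invVec σ₁ i : ℤ) - (invVec σ₂ i : ℤ)).natAbs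

/-- Number of inversions of a permutation. -/
def inversions {n : ℕ} (σ : Equiv.Perm (Fin n)) : ℕ :=
  (Finset.univ.filter (fun p : Fin n × Fin n => p.1 < p.2 ∧ σ p.2 < σ p.1)).card

/-- Number of permutations of `Sₙ` with exactly `k` inversions. -/
def Kn (n k : ℕ) : ℕ :=
  (Finset.univ.filter (fun σ : Equiv.Perm (Fin n) => inversions σ = k)).card

/-! The Lehmer code `σ ↦ (x_σ(i))ᵢ` is a bijection from `Sₙ` onto `∏ᵢ [0:i]`, so for uniform `σ`
the coordinates `Uᵢ = x_σ(i)` are independent and uniform, and `d_{x,ℓ₁}(π, σ) = ∑ᵢ |aᵢ - Uᵢ|` with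
`aᵢ = x_π(i)`. The mean is therefore `∑ᵢ E|aᵢ - Uᵢ|`, and
`E|a - U| = (a(a+1) + (i-a)(i-a+1)) / (2(i+1)) ≥ i/4`, strictly for `i ≥ 1`. The variance is
`∑ᵢ Var|aᵢ - Uᵢ| ≤ ∑ᵢ i² = (n-1)n(2n-1)/6`, as `|aᵢ - Uᵢ|` takes values in `[0, i]`. -/

section InversionCount

open Function

variable {α β : Type*} [LinearOrder α] [LinearOrder β]

def invCount [Fintype α] (p : α → β) (i : α) : ℕ := #{j | j < i ∧ p i < p j}

lemma lt_iff_card_filter_lt {γ : Type*} (s : Finset γ) (f : γ → β) {a b : γ} (ha : a ∈ s)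
    (hab : f a ≠ f b) : f b < f a ↔ #{x ∈ s | f a < f x} < #{x ∈ s | f b < f x} := by
  constructor
  · intro hba
    refine card_lt_card ((ssubset_iff_of_subset fun x hx => ?_).mpr ⟨a, ?_, ?_⟩)
    · simp only [mem_filter] at hx ⊢
      exact ⟨hx.1, hba.trans hx.2⟩
    · simp [ha, hba]
    · simp
  · intro hcard
    by_contra hba
    have hab' : f a < f b := lt_of_le_of_ne (not_lt.mp hba) hab
    have hsub : {x ∈ s | f b < f x} ⊆ {x ∈ s | f a < f x} :=
      monotone_filter_right s fun _ _ => hab'.trans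
    exact (card_le_card hsub).not_gt hcard

lemma lt_iff_lt_of_forall_lt {p q : α → β} (hp : Injective p) (hq : Injective q) {j l : α}
    (hj : ∀ k < j, (p j < p k ↔ q j < q k)) (hl : ∀ k < l, (p l < p k ↔ q l < q k)) :
    p j < p l ↔ q j < q l := by
  rcases lt_trichotomy j l with hjl | rfl | hlj
  · rw [← not_iff_not, not_lt, not_lt, (hp.ne hjl.ne').le_iff_lt, (hq.ne hjl.ne').le_iff_lt]
    exact hl j hjl
  · simp
  · exact hj l hlj

theorem lt_iff_lt_of_invCount_eq [Fintype α] {p q : α → β} (hp : Injective p) (hq : Injective q)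
    (h : invCount p = invCount q) (j l : α) : p j < p l ↔ q j < q l := by
  have key : ∀ i, ∀ k < i, (p i < p k ↔ q i < q k) := by
    intro i
    induction i using WellFoundedLT.induction with
    | _ i ih =>
      intro k hk
      have hsame :
          {x ∈ univ.filter (· < i) | p k < p x} = {x ∈ univ.filter (· < i) | q k < q x} := by
        refine filter_congr fun x hx => lt_iff_lt_of_forall_lt hp hq (ih k hk) (ih x ?_)
        simpa using hx
      have hk' : k ∈ univ.filter (· < i) := by simpa using hk
      -- `p i < p k` iff fewer earlier values exceed `p k` than `p i`; the induction hypothesis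
      -- makes the first count the same for `p` and `q`, and `h` the second.
      rw [lt_iff_card_filter_lt _ p hk' (hp.ne hk.ne), lt_iff_card_filter_lt _ q hk' (hq.ne hk.ne),
        hsame]
      simp only [filter_filter]
      exact Iff.of_eq (congrArg (_ < ·) (congrFun h i))
  exact lt_iff_lt_of_forall_lt hp hq (key j) (key l)

theorem Equiv.Perm.eq_of_lt_iff_lt [Finite α] {σ τ : Equiv.Perm α}
    (h : ∀ j l, σ j < σ l ↔ τ j < τ l) : σ = τ := by
  have hmono : StrictMono (τ ∘ σ.symm) := fun a b hab => (h _ _).mp (by simpa using hab)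
  ext x
  simpa using (congrFun hmono.eq_id (σ x)).symm

theorem invCount_injective [Fintype α] : Injective fun σ : Equiv.Perm α => invCount σ :=
  fun _ _ h => Equiv.Perm.eq_of_lt_iff_lt (lt_iff_lt_of_invCount_eq (Equiv.injective _)
    (Equiv.injective _) h)

end InversionCount

section LehmerCode

variable {n : ℕ}

lemma invVec_le (σ : Equiv.Perm (Fin n)) (i : Fin n) : invVec σ i ≤ i := by
  refine (card_le_card fun j hj => ?_).trans (Fin.card_Iio i).le
  simpa using (mem_filter.mp hj).2.1

lemma invVec_eq_invCount (σ : Equiv.Perm (Fin n)) : invVec σ = invCount ⇑σ⁻¹ := rfl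

def lehmerCode (σ : Equiv.Perm (Fin n)) (i : Fin n) : Fin (i + 1) :=
  ⟨invVec σ i, Nat.lt_succ_of_le (invVec_le σ i)⟩

theorem card_pi_fin_succ : Fintype.card (∀ i : Fin n, Fin (i + 1)) = n.factorial := by
  rw [Fintype.card_pi]
  simp only [Fintype.card_fin]
  rw [Fin.prod_univ_eq_prod_range (· + 1) n, prod_range_add_one_eq_factorial]

theorem lehmerCode_bijective : Function.Bijective (lehmerCode (n := n)) := by
  rw [Fintype.bijective_iff_injective_and_card, Fintype.card_perm, Fintype.card_fin,
    card_pi_fin_succ]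
  refine ⟨fun σ τ h => inv_injective (invCount_injective ?_), rfl⟩
  change invCount ⇑σ⁻¹ = invCount ⇑τ⁻¹
  rw [← invVec_eq_invCount, ← invVec_eq_invCount]
  funext i
  exact congrArg Fin.val (congrFun h i)

end LehmerCode

section PiAverage

variable {ι : Type*} [Fintype ι] [DecidableEq ι] {β : ι → Type*} [∀ i, Fintype (β i)]

theorem sum_pi_mul_eq {R : Type*} [CommSemiring R] (i : ι) (g : β i → R)
    (h : (∀ j : {j // j ≠ i}, β j) → R) :
    ∑ x : ∀ j, β j, g (x i) * h (fun j => x j) = (∑ y, g y) * ∑ z, h z := by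
  rw [sum_mul_sum, ← Fintype.sum_prod_type']
  exact Fintype.sum_equiv (Equiv.piSplitAt i β) _ _ fun _ => rfl

variable {K : Type*} [Field K] [CharZero K] [∀ i, Nonempty (β i)]

theorem sum_pi_apply_div_card (i : ι) (g : β i → K) :
    (∑ x : ∀ j, β j, g (x i)) / Fintype.card (∀ j, β j) = (∑ y, g y) / Fintype.card (β i) := by
  have hsum := sum_pi_mul_eq i g fun _ => 1
  have hcard := Fintype.card_congr (Equiv.piSplitAt i β)
  simp only [mul_one, sum_const, card_univ, nsmul_eq_mul] at hsum
  rw [hsum, hcard, Fintype.card_prod, Nat.cast_mul]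
  exact mul_div_mul_right _ _ (Nat.cast_ne_zero.mpr Fintype.card_ne_zero)

theorem sum_pi_sum_div_card (f : ∀ i, β i → K) :
    (∑ x : ∀ j, β j, ∑ i, f i (x i)) / Fintype.card (∀ j, β j)
      = ∑ i, (∑ y, f i y) / Fintype.card (β i) := by
  rw [sum_comm, sum_div]
  exact sum_congr rfl fun i _ => sum_pi_apply_div_card i (f i)

/-- Variance is additive over independent coordinates. -/
theorem sum_pi_sq_sum_div_card (f : ∀ i, β i → K) (hf : ∀ i, ∑ y, f i y = 0) :
    (∑ x : ∀ j, β j, (∑ i, f i (x i)) ^ 2) / Fintype.card (∀ j, β j)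
      = ∑ i, (∑ y, f i y ^ 2) / Fintype.card (β i) := by
  have hcross : ∀ i j, j ≠ i → ∑ x : ∀ k, β k, f i (x i) * f j (x j) = 0 := fun i j hji =>
    (sum_pi_mul_eq i (f i) fun z => f j (z ⟨j, hji⟩)).trans (by rw [hf i, zero_mul])
  simp only [sq, sum_mul_sum]
  rw [sum_comm, sum_div]
  refine sum_congr rfl fun i _ => ?_
  rw [sum_comm, sum_eq_single i (fun j _ hji => hcross i j hji) (by simp)]
  exact sum_pi_apply_div_card i fun y => f i y * f i y

end PiAverage

section AbsDeviation

def meanAbsDev (m a : ℕ) : ℚ := (∑ y : Fin (m + 1), |(a : ℚ) - y|) / (m + 1)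

def varAbsDev (m a : ℕ) : ℚ :=
  (∑ y : Fin (m + 1), (|(a : ℚ) - y| - meanAbsDev m a) ^ 2) / (m + 1)

theorem sum_range_natCast (n : ℕ) : ∑ i ∈ range n, (i : ℚ) = n * (n - 1) / 2 := by
  induction n with
  | zero => simp
  | succ n ih => rw [sum_range_succ, ih]; push_cast; ring

theorem sum_range_natCast_sq (n : ℕ) :
    ∑ i ∈ range n, (i : ℚ) ^ 2 = n * (n - 1) * (2 * n - 1) / 6 := by
  induction n with
  | zero => simp
  | succ n ih => rw [sum_range_succ, ih]; push_cast; ring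

theorem sum_range_abs_sub (a d : ℕ) :
    ∑ y ∈ range (a + d + 1), |(a : ℚ) - y| = (a * (a + 1) + d * (d + 1)) / 2 := by
  induction a with
  | zero =>
    simp only [Nat.cast_zero, zero_sub, abs_neg, Nat.abs_cast, zero_add]
    rw [sum_range_natCast]
    push_cast
    ring
  | succ a ih =>
    rw [show a + 1 + d + 1 = a + d + 1 + 1 by ring, sum_range_succ']
    push_cast
    simp only [add_sub_add_right_eq_sub, sub_zero]
    rw [ih, abs_of_nonneg (by positivity)]
    ring

variable {m a : ℕ}

theorem meanAbsDev_eq (h : a ≤ m) :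
    meanAbsDev m a = (a * (a + 1) + (m - a) * (m - a + 1)) / (2 * (m + 1)) := by
  obtain ⟨d, rfl⟩ := Nat.exists_eq_add_of_le h
  rw [meanAbsDev, Fin.sum_univ_eq_sum_range (fun y => |(a : ℚ) - y|),
    sum_range_abs_sub]
  push_cast
  field_simp
  ring

theorem sum_abs_sub_sub_meanAbsDev (m a : ℕ) :
    ∑ y : Fin (m + 1), (|(a : ℚ) - y| - meanAbsDev m a) = 0 := by
  rw [sum_sub_distrib, sum_const, card_univ, Fintype.card_fin, nsmul_eq_mul, meanAbsDev]
  push_cast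
  field_simp
  ring

theorem div_four_le_meanAbsDev (h : a ≤ m) : (m : ℚ) / 4 ≤ meanAbsDev m a := by
  have ha : (a : ℚ) ≤ m := by exact_mod_cast h
  rw [meanAbsDev_eq h, le_div_iff₀ (by positivity)]
  nlinarith [sq_nonneg (2 * (a : ℚ) - m)]

theorem div_four_lt_meanAbsDev (h : a ≤ m) (hm : 0 < m) : (m : ℚ) / 4 < meanAbsDev m a := by
  have ha : (a : ℚ) ≤ m := by exact_mod_cast h
  have hm' : (0 : ℚ) < m := by exact_mod_cast hm
  rw [meanAbsDev_eq h, lt_div_iff₀ (by positivity)]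
  nlinarith [sq_nonneg (2 * (a : ℚ) - m)]

theorem meanAbsDev_le (h : a ≤ m) : meanAbsDev m a ≤ m := by
  have ha : (a : ℚ) ≤ m := by exact_mod_cast h
  rw [meanAbsDev_eq h, div_le_iff₀ (by positivity)]
  nlinarith

theorem varAbsDev_le (h : a ≤ m) : varAbsDev m a ≤ (m : ℚ) ^ 2 := by
  have hμ₀ : 0 ≤ meanAbsDev m a := le_trans (by positivity) (div_four_le_meanAbsDev h)
  have hμ := meanAbsDev_le h
  have hterm (y : Fin (m + 1)) : (|(a : ℚ) - y| - meanAbsDev m a) ^ 2 ≤ (m : ℚ) ^ 2 := by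
    have hy : (y : ℚ) ≤ m := by exact_mod_cast Nat.lt_succ_iff.mp y.isLt
    have ha : (a : ℚ) ≤ m := by exact_mod_cast h
    have habs : |(a : ℚ) - y| ≤ m := abs_le.mpr ⟨by linarith [y.val.cast_nonneg (α := ℚ)],
      by linarith [a.cast_nonneg (α := ℚ)]⟩
    exact sq_le_sq' (by linarith [abs_nonneg ((a : ℚ) - y)]) (by linarith)
  rw [varAbsDev, div_le_iff₀ (by positivity)]
  calc _ ≤ ∑ _y : Fin (m + 1), (m : ℚ) ^ 2 := sum_le_sum fun y _ => hterm y
    _ = (m : ℚ) ^ 2 * (m + 1) := by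
      rw [sum_const, card_univ, Fintype.card_fin, nsmul_eq_mul]
      push_cast
      ring

end AbsDeviation

section InversionDistance

variable {n : ℕ}

theorem sum_lehmerCode_div_factorial (F : (∀ i : Fin n, Fin (i + 1)) → ℚ) :
    (∑ σ, F (lehmerCode σ)) / n.factorial
      = (∑ x, F x) / Fintype.card (∀ i : Fin n, Fin (i + 1)) := by
  rw [lehmerCode_bijective.sum_comp, card_pi_fin_succ]

theorem dinv_eq_sum_abs (π σ : Equiv.Perm (Fin n)) :
    (dinv π σ : ℚ) = ∑ i, |(invVec π i : ℚ) - (lehmerCode σ i : ℕ)| := by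
  simp [dinv, lehmerCode, Nat.cast_natAbs]

theorem dinv_mean (π : Equiv.Perm (Fin n)) :
    (∑ σ, (dinv π σ : ℚ)) / n.factorial = ∑ i : Fin n, meanAbsDev i (invVec π i) := by
  simp only [dinv_eq_sum_abs]
  rw [sum_lehmerCode_div_factorial fun x => ∑ i, |(invVec π i : ℚ) - (x i : ℕ)|,
    sum_pi_sum_div_card fun (i : Fin n) (y : Fin (i + 1)) => |(invVec π i : ℚ) - (y : ℕ)|]
  simp [meanAbsDev]

theorem dinv_variance (π : Equiv.Perm (Fin n)) :
    (∑ σ, ((dinv π σ : ℚ) - (∑ τ, (dinv π τ : ℚ)) / n.factorial) ^ 2) / n.factorial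
      = ∑ i : Fin n, varAbsDev i (invVec π i) := by
  set f : ∀ i : Fin n, Fin (i + 1) → ℚ :=
    fun i y => |(invVec π i : ℚ) - y| - meanAbsDev i (invVec π i)
  have hcentered (σ : Equiv.Perm (Fin n)) :
      (dinv π σ : ℚ) - ∑ i : Fin n, meanAbsDev i (invVec π i) = ∑ i, f i (lehmerCode σ i) := by
    rw [dinv_eq_sum_abs, ← sum_sub_distrib]
  simp only [dinv_mean, hcentered]
  rw [sum_lehmerCode_div_factorial fun x => (∑ i, f i (x i)) ^ 2,
    sum_pi_sq_sum_div_card f fun i => sum_abs_sub_sub_meanAbsDev i _]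
  simp [f, varAbsDev]

end InversionDistance

/-- Mean and variance bounds for the inversion-ℓ₁ distance from a fixed permutation
to a uniformly random permutation. -/
theorem dinv_mean_var (n : ℕ) (hn : 2 ≤ n) (π : Equiv.Perm (Fin n)) :
    ((∑ σ : Equiv.Perm (Fin n), (dinv π σ : ℚ)) / (Nat.factorial n : ℚ)
        > (n : ℚ) * ((n : ℚ) - 1) / 8)
    ∧ ((∑ σ : Equiv.Perm (Fin n),
          ((dinv π σ : ℚ) -
            (∑ τ : Equiv.Perm (Fin n), (dinv π τ : ℚ)) / (Nat.factorial n : ℚ)) ^ 2)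
        / (Nat.factorial n : ℚ)
        < ((n : ℚ) + 1) * ((n : ℚ) + 2) * (2 * (n : ℚ) + 3) / 6) := by
  constructor
  · rw [dinv_mean, gt_iff_lt]
    calc (n : ℚ) * (n - 1) / 8 = ∑ i : Fin n, (i : ℚ) / 4 := by
          rw [← sum_div, Fin.sum_univ_eq_sum_range (fun i => (i : ℚ)) n, sum_range_natCast]
          ring
      _ < ∑ i : Fin n, meanAbsDev i (invVec π i) :=
          sum_lt_sum (fun i _ => div_four_le_meanAbsDev (invVec_le π i))
            ⟨⟨1, hn⟩, mem_univ _, div_four_lt_meanAbsDev (invVec_le π _) one_pos⟩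
  · rw [dinv_variance]
    calc _ ≤ ∑ i : Fin n, (i : ℚ) ^ 2 := sum_le_sum fun i _ => varAbsDev_le (invVec_le π i)
      _ = n * (n - 1) * (2 * n - 1) / 6 := by
          rw [Fin.sum_univ_eq_sum_range (fun i => (i : ℚ) ^ 2) n, sum_range_natCast_sq]
      _ < _ := by nlinarith [(n.cast_nonneg : (0 : ℚ) ≤ n)]
end

section
/- Let K_n(k) be the number of permutations of Sₙ with exactly k inversions and T_n(D) = ∑_{k=0}^{D} K_n(k). Then for 0 ≤ D ≤ n, T_n(D) = K_{n+1}(D), and consequently the number of permutations at Kendall tau distance at most D from any fixed permutation equals T_n(D) ≤ C(n+D−1, D). -/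
open Finset

/-!
Inserting the largest value at position `j` of a permutation of `n` letters adds exactly
`n - j` inversions (it exceeds every later entry), and each permutation of `n + 1` letters
arises exactly once this way. Hence `K_{n+1}(D) = ∑_{i ≤ min(n, D)} K_n(D - i)`, which is
`T_n(D)` when `D ≤ n`, and likewise `T_{n+1}(D) ≤ ∑_{i ≤ D} T_n(D - i)`; the hockey-stick
identity then gives `T_n(D) ≤ C(n + D - 1, D)` by induction on `n`. For the ball, relabelling
positions by a permutation preserves the number of pairs satisfying a symmetric relation, so
`d_τ` is right invariant and `d_τ(π, σ) = inv(σ π⁻¹)`.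
-/

namespace Kendall

open Equiv

variable {n : ℕ}

def insertMax (j : Fin (n + 1)) (e : Perm (Fin n)) : Perm (Fin (n + 1)) :=
  ((finSuccEquiv' j).trans e.optionCongr).trans finSuccEquivLast.symm

@[simp] lemma insertMax_apply_self (j : Fin (n + 1)) (e : Perm (Fin n)) :
    insertMax j e j = Fin.last n := by simp [insertMax]

@[simp] lemma insertMax_apply_succAbove (j : Fin (n + 1)) (e : Perm (Fin n)) (k : Fin n) :
    insertMax j e (j.succAbove k) = (e k).castSucc := by simp [insertMax]

lemma insertMax_lt_last_iff (j b : Fin (n + 1)) (e : Perm (Fin n)) :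
    insertMax j e b < Fin.last n ↔ b ≠ j := by
  rcases eq_or_ne b j with rfl | hb
  · simp
  · obtain ⟨k, rfl⟩ := Fin.exists_succAbove_eq hb
    simp [hb, Fin.castSucc_lt_last]

lemma insertMax_injective :
    Function.Injective fun p : Fin (n + 1) × Perm (Fin n) ↦ insertMax p.1 p.2 := by
  rintro ⟨j, e⟩ ⟨j', e'⟩ h
  dsimp only at h
  obtain rfl : j = j' := (insertMax j' e').injective <| by
    rw [← h, insertMax_apply_self, h, insertMax_apply_self]
  refine Prod.ext rfl (Equiv.ext fun k ↦ Fin.castSucc_injective n ?_)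
  simpa using congr($h (j.succAbove k))

lemma insertMax_bijective :
    Function.Bijective fun p : Fin (n + 1) × Perm (Fin n) ↦ insertMax p.1 p.2 := by
  rw [Fintype.bijective_iff_injective_and_card]
  refine ⟨insertMax_injective, ?_⟩
  simp [Fintype.card_perm, Nat.factorial_succ]

lemma inversions_eq_sum (σ : Perm (Fin n)) :
    inversions σ = ∑ a, ∑ b, if a < b ∧ σ b < σ a then 1 else 0 := by
  rw [inversions, card_filter, Fintype.sum_prod_type]

lemma inversions_insertMax (j : Fin (n + 1)) (e : Perm (Fin n)) :
    inversions (insertMax j e) = n - j + inversions e := by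
  have hj : ∑ b, (if j < b ∧ insertMax j e b < insertMax j e j then 1 else 0) = n - j := by
    simp only [insertMax_apply_self, insertMax_lt_last_iff, ← card_filter]
    simp [and_iff_left_of_imp (ne_of_gt : j < _ → _ ≠ j), filter_lt_eq_Ioi]
  rw [inversions_eq_sum, inversions_eq_sum, Fin.sum_univ_succAbove _ j, hj]
  congr 1
  refine Fintype.sum_congr _ _ fun k ↦ ?_
  rw [Fin.sum_univ_succAbove _ j]
  simp [Fin.succAbove_lt_succAbove_iff, Fin.le_last]

lemma card_filter_inversions_succ (P : ℕ → Prop) [DecidablePred P] :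
    #{σ : Perm (Fin (n + 1)) | P (inversions σ)} =
      ∑ i ∈ range (n + 1), #{e : Perm (Fin n) | P (i + inversions e)} := by
  let ins := Equiv.ofBijective _ (insertMax_bijective (n := n))
  calc #{σ : Perm (Fin (n + 1)) | P (inversions σ)}
      = #{p : Fin (n + 1) × Perm (Fin n) | P (n - p.1 + inversions p.2)} :=
        (card_equiv ins fun p ↦ by simp [ins, inversions_insertMax]).symm
    _ = ∑ j : Fin (n + 1), #{e : Perm (Fin n) | P (n - j + inversions e)} := by
        simp only [card_filter, Fintype.sum_prod_type]
    _ = ∑ i ∈ range (n + 1), #{e : Perm (Fin n) | P (i + inversions e)} := by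
        rw [Fin.sum_univ_eq_sum_range (fun j ↦ #{e : Perm (Fin n) | P (n - j + inversions e)}),
          ← sum_range_reflect]
        refine sum_congr rfl fun i hi ↦ ?_
        rw [Nat.add_sub_cancel, Nat.sub_sub_self (by simpa [Nat.lt_succ_iff] using hi)]

def Tn (n D : ℕ) : ℕ :=
  #{σ : Perm (Fin n) | inversions σ ≤ D}

lemma sum_range_Kn (n D : ℕ) : ∑ k ∈ range (D + 1), Kn n k = Tn n D := by
  simp only [Kn, Tn, card_filter]
  rw [sum_comm]
  refine sum_congr rfl fun σ _ ↦ ?_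
  simp

lemma card_add_inversions_eq (i k : ℕ) :
    #{e : Perm (Fin n) | i + inversions e = k} = if i ≤ k then Kn n (k - i) else 0 := by
  split_ifs with h
  · exact congr_arg card (filter_congr fun e _ ↦ by omega)
  · exact card_eq_zero.2 (filter_eq_empty_iff.2 fun e _ ↦ by omega)

lemma card_add_inversions_le (i k : ℕ) :
    #{e : Perm (Fin n) | i + inversions e ≤ k} = if i ≤ k then Tn n (k - i) else 0 := by
  split_ifs with h
  · exact congr_arg card (filter_congr fun e _ ↦ by omega)
  · exact card_eq_zero.2 (filter_eq_empty_iff.2 fun e _ ↦ by omega)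

lemma Kn_succ (n D : ℕ) : Kn (n + 1) D = ∑ i ∈ range (n + 1) with i ≤ D, Kn n (D - i) := by
  rw [Kn, card_filter_inversions_succ (· = D), sum_filter]
  simp only [card_add_inversions_eq]

lemma Tn_succ (n D : ℕ) : Tn (n + 1) D = ∑ i ∈ range (n + 1) with i ≤ D, Tn n (D - i) := by
  rw [Tn, card_filter_inversions_succ (· ≤ D), sum_filter]
  simp only [card_add_inversions_le]

lemma Kn_succ_of_le {n D : ℕ} (hD : D ≤ n) : Kn (n + 1) D = Tn n D := by
  have : {i ∈ range (n + 1) | i ≤ D} = range (D + 1) := by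
    ext i; simp only [mem_filter, mem_range]; omega
  rw [Kn_succ, this, ← sum_range_Kn, ← sum_range_reflect]
  exact sum_congr rfl fun i hi ↦ by
    rw [Nat.add_sub_cancel, Nat.sub_sub_self (by simpa [Nat.lt_succ_iff] using hi)]

lemma Tn_succ_le_choose (n D : ℕ) : Tn (n + 1) D ≤ (n + D).choose D := by
  induction n generalizing D with
  | zero =>
    simpa [Tn, Fintype.card_perm] using card_le_univ {σ : Perm (Fin 1) | inversions σ ≤ D}
  | succ n ih =>
    calc Tn (n + 2) D = ∑ i ∈ range (n + 2) with i ≤ D, Tn (n + 1) (D - i) := Tn_succ _ _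
      _ ≤ ∑ i ∈ range (D + 1), Tn (n + 1) (D - i) :=
          sum_le_sum_of_subset fun i hi ↦ by simp only [mem_filter, mem_range] at hi ⊢; omega
      _ ≤ ∑ i ∈ range (D + 1), (n + (D - i)).choose (D - i) := sum_le_sum fun i _ ↦ ih _
      _ = ∑ k ∈ range (D + 1), (k + n).choose n := by
          rw [← sum_range_reflect]
          refine sum_congr rfl fun k hk ↦ ?_
          rw [Nat.add_sub_cancel, Nat.sub_sub_self (by simpa [Nat.lt_succ_iff] using hk),
            add_comm, Nat.choose_symm_add]
      _ = (n + 1 + D).choose D := by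
          rw [Nat.sum_range_add_choose, ← Nat.choose_symm_add]; ring_nf

section SymmetricPairs

variable {α : Type*} [LinearOrder α] [Fintype α] (R : α → α → Prop) [DecidableRel R]

lemma card_filter_ne_eq_two_mul (hR : ∀ a b, R a b → R b a) :
    #{p : α × α | p.1 ≠ p.2 ∧ R p.1 p.2} = 2 * #{p : α × α | p.1 < p.2 ∧ R p.1 p.2} := by
  have hswap : #{p : α × α | p.2 < p.1 ∧ R p.1 p.2} = #{p : α × α | p.1 < p.2 ∧ R p.1 p.2} :=
    card_equiv (Equiv.prodComm α α) fun p ↦ by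
      simp [show R p.1 p.2 ↔ R p.2 p.1 from ⟨hR _ _, hR _ _⟩]
  rw [two_mul]
  nth_rw 2 [← hswap]
  rw [← card_union_of_disjoint, ← filter_or]
  · refine congr_arg card (filter_congr fun p _ ↦ ?_)
    rw [ne_iff_lt_or_gt, or_and_right]
  · exact disjoint_filter.2 fun p _ h h' ↦ lt_asymm h.1 h'.1

lemma card_filter_lt_perm (hR : ∀ a b, R a b → R b a) (ρ : Perm α) :
    #{p : α × α | p.1 < p.2 ∧ R (ρ p.1) (ρ p.2)} = #{p : α × α | p.1 < p.2 ∧ R p.1 p.2} := by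
  have h : #{p : α × α | p.1 ≠ p.2 ∧ R (ρ p.1) (ρ p.2)} = #{p : α × α | p.1 ≠ p.2 ∧ R p.1 p.2} :=
    card_equiv (ρ.prodCongr ρ) fun p ↦ by simp
  rw [card_filter_ne_eq_two_mul (fun a b ↦ R (ρ a) (ρ b)) fun a b ↦ hR _ _,
    card_filter_ne_eq_two_mul R hR] at h
  omega

end SymmetricPairs

lemma dtau_mul_right (π σ ρ : Perm (Fin n)) : dtau (π * ρ) (σ * ρ) = dtau π σ := by
  refine card_filter_lt_perm (fun a b ↦ ¬(π a < π b ↔ σ a < σ b)) (fun a b h ↦ ?_) ρ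
  rcases eq_or_ne a b with rfl | hab
  · exact h
  have key (f : Perm (Fin n)) : f b < f a ↔ ¬f a < f b := by
    rw [not_lt, lt_iff_le_and_ne, and_iff_left (f.injective.ne hab.symm)]
  rwa [key π, key σ, not_iff_not]

lemma dtau_one_left (τ : Perm (Fin n)) : dtau 1 τ = inversions τ := by
  refine congr_arg card (filter_congr fun p _ ↦ and_congr_right fun h ↦ ?_)
  rw [Perm.one_apply, Perm.one_apply, iff_true_left h, not_lt,
    le_iff_lt_or_eq, or_iff_left (τ.injective.ne h.ne')]

lemma dtau_eq_inversions (π σ : Perm (Fin n)) : dtau π σ = inversions (σ * π⁻¹) := by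
  rw [← dtau_mul_right π σ π⁻¹, mul_inv_cancel, dtau_one_left]

lemma card_dtau_le (π : Perm (Fin n)) (D : ℕ) : #{σ : Perm (Fin n) | dtau π σ ≤ D} = Tn n D :=
  card_equiv (Equiv.mulRight π⁻¹) fun σ ↦ by simp [dtau_eq_inversions]

end Kendall

/-- T_n(D) = K_{n+1}(D) for D ≤ n, and the Kendall tau ball of radius D around any
permutation has size T_n(D) ≤ C(n+D−1, D). -/
theorem kendall_ball_size (n D : ℕ) (hD : D ≤ n) :
    (∑ k ∈ Finset.range (D + 1), Kn n k) = Kn (n + 1) D ∧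
    (∀ π : Equiv.Perm (Fin n),
      (Finset.univ.filter (fun σ : Equiv.Perm (Fin n) => dtau π σ ≤ D)).card
        = ∑ k ∈ Finset.range (D + 1), Kn n k) ∧
    (∑ k ∈ Finset.range (D + 1), Kn n k) ≤ Nat.choose (n + D - 1) D := by
  rw [Kendall.sum_range_Kn]
  refine ⟨(Kendall.Kn_succ_of_le hD).symm, fun π ↦ Kendall.card_dtau_le π D, ?_⟩
  obtain _ | n := n
  · obtain rfl : D = 0 := Nat.le_zero.1 hD
    decide
  · simpa using Kendall.Tn_succ_le_choose n D
end

section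
/- For any x in the product set X = [0:1]×[0:2]×⋯×[0:n−1] and any integer 0 ≤ D ≤ n(n−1)/2, the number of points y ∈ X with ℓ₁ distance at most D from x is at most 2^{min(n,D)} · C(n+D, D). -/
/-!
Embed `X` in `ℤᵐ`, `m = n - 1`. A point `y` of the ℓ₁-ball of radius `D` around `x` is
determined by the vector `d` of coordinate distances `dᵢ = |xᵢ - yᵢ|` together with a sign for
each nonzero `dᵢ`. By stars and bars there are at most `C(m + D, D)` vectors `d ∈ ℕᵐ` with
`∑ dᵢ ≤ D`, and each has at most `min(m, D)` nonzero entries, so it accounts for at most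
`2 ^ min(m, D)` points.
-/

open Finset

section

variable {ι : Type*} [Fintype ι]

/-- Padding `d` with the slack `D - ∑ dᵢ` as an extra coordinate turns `∑ dᵢ ≤ D` into
`∑ = D` over `Option ι`, which stars and bars counts exactly. -/
theorem card_le_choose_of_forall_sum_le (D : ℕ) (S : Finset (ι → ℕ))
    (hS : ∀ d ∈ S, ∑ i, d i ≤ D) : #S ≤ (Fintype.card ι + D).choose D := by
  classical
  let pad : (ι → ℕ) → Option ι → ℕ := fun d o => o.elim (D - ∑ i, d i) d
  have sum_pad (d : S) : ∑ o, pad d o = D := by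
    have := hS d d.2
    simp only [pad, Fintype.sum_option, Option.elim]
    omega
  have pad_injective : Function.Injective fun d : S =>
      (Sym.equivNatSumOfFintype (Option ι) D).symm ⟨pad d, sum_pad d⟩ := by
    intro d d' h
    ext i : 2
    exact congrFun (congrArg Subtype.val ((Equiv.injective _) h)) (some i)
  calc #S = Fintype.card S := (Fintype.card_coe S).symm
    _ ≤ Fintype.card (Sym (Option ι) D) := Fintype.card_le_of_injective _ pad_injective
    _ = (Fintype.card ι + D).choose D := by
      rw [Sym.card_sym_eq_choose, Fintype.card_option, Nat.add_right_comm, Nat.add_sub_cancel]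

theorem card_filter_ne_zero_le_sum (d : ι → ℕ) : #{i | d i ≠ 0} ≤ ∑ i, d i := by
  rw [card_eq_sum_ones]
  exact (sum_le_sum fun i hi => Nat.one_le_iff_ne_zero.2 (mem_filter.1 hi).2).trans
    (sum_le_sum_of_subset (filter_subset _ _))

theorem card_filter_natAbs_sub_eq_le [DecidableEq ι] (x : ι → ℤ) (d : ι → ℕ)
    (s : Finset (ι → ℤ)) :
    #{y ∈ s | (fun i => (x i - y i).natAbs) = d} ≤ 2 ^ #{i | d i ≠ 0} := by
  have subset_pi : {y ∈ s | (fun i => (x i - y i).natAbs) = d} ⊆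
      Fintype.piFinset fun i => {x i - d i, x i + d i} := by
    intro y hy
    rw [Fintype.mem_piFinset]
    intro i
    have := congrFun (mem_filter.1 hy).2 i
    simp only [mem_insert, mem_singleton]
    omega
  have card_pair_le (i : ι) : #{x i - d i, x i + d i} ≤ 2 ^ if d i ≠ 0 then 1 else 0 := by
    by_cases h : d i = 0
    · simp [h]
    · simpa [h] using card_le_two
  calc _ ≤ #(Fintype.piFinset fun i => {x i - d i, x i + d i}) := card_le_card subset_pi
    _ = ∏ i, #{x i - d i, x i + d i} := Fintype.card_piFinset _
    _ ≤ ∏ i, 2 ^ if d i ≠ 0 then 1 else 0 := prod_le_prod' fun i _ => card_pair_le i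
    _ = 2 ^ #{i | d i ≠ 0} := by rw [prod_pow_eq_pow_sum, sum_boole, Nat.cast_id]

theorem card_filter_sum_natAbs_sub_le [DecidableEq ι] (x : ι → ℤ) (D : ℕ)
    (s : Finset (ι → ℤ)) :
    #{y ∈ s | ∑ i, (x i - y i).natAbs ≤ D} ≤
      2 ^ min (Fintype.card ι) D * (Fintype.card ι + D).choose D := by
  set ball := {y ∈ s | ∑ i, (x i - y i).natAbs ≤ D}
  let dist : (ι → ℤ) → ι → ℕ := fun y i => (x i - y i).natAbs
  have sum_dist_le : ∀ d ∈ ball.image dist, ∑ i, d i ≤ D := by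
    simp only [mem_image]
    rintro _ ⟨y, hy, rfl⟩
    exact (mem_filter.1 hy).2
  have fiber_le (d) (hd : d ∈ ball.image dist) :
      #{y ∈ ball | dist y = d} ≤ 2 ^ min (Fintype.card ι) D :=
    calc #{y ∈ ball | dist y = d} ≤ #{y ∈ s | dist y = d} :=
          card_le_card (filter_subset_filter _ (filter_subset _ _))
      _ ≤ 2 ^ #{i | d i ≠ 0} := card_filter_natAbs_sub_eq_le x d s
      _ ≤ 2 ^ min (Fintype.card ι) D := Nat.pow_le_pow_right two_pos <|
          le_min (card_le_univ _) ((card_filter_ne_zero_le_sum d).trans (sum_dist_le d hd))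
  calc #ball ≤ 2 ^ min (Fintype.card ι) D * #(ball.image dist) :=
        card_le_mul_card_image _ _ fiber_le
    _ ≤ _ := Nat.mul_le_mul_left _ (card_le_choose_of_forall_sum_le D _ sum_dist_le)

end

theorem invVec_ball_bound_general (n D : ℕ)
    (x : ∀ i : Fin (n - 1), Fin ((i : ℕ) + 2)) :
    ((Finset.univ : Finset (∀ i : Fin (n - 1), Fin ((i : ℕ) + 2))).filter
        (fun y => (∑ i : Fin (n - 1), (((x i : ℕ) : ℤ) - ((y i : ℕ) : ℤ)).natAbs) ≤ D)).card
      ≤ 2 ^ (min n D) * Nat.choose (n + D) D := by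
  let toInt : (∀ i : Fin (n - 1), Fin ((i : ℕ) + 2)) → Fin (n - 1) → ℤ :=
    fun y i => (y i : ℕ)
  have toInt_injective : Function.Injective toInt := fun y y' h =>
    funext fun i => Fin.ext (Int.ofNat_inj.1 (congrFun h i))
  calc _ ≤ #{z ∈ univ.image toInt | ∑ i, (toInt x i - z i).natAbs ≤ D} :=
        card_le_card_of_injOn toInt (fun y hy => by simpa [toInt] using hy)
          toInt_injective.injOn
    _ ≤ 2 ^ min (n - 1) D * (n - 1 + D).choose D := by
      simpa using card_filter_sum_natAbs_sub_le (toInt x) D (univ.image toInt)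
    _ ≤ 2 ^ min n D * (n + D).choose D := by
      gcongr
      · exact one_le_two
      all_goals omega

/-- In the product set X = [0:1]×[0:2]×⋯×[0:n−1] (coordinate i of `Fin (n-1)` ranges
over {0,…,i+1}), the ℓ₁-ball of radius D ≤ n(n−1)/2 around any point has at most
2^{min(n,D)} · C(n+D, D) points. -/
theorem invVec_ball_bound (n D : ℕ) (hD : D ≤ n * (n - 1) / 2)
    (x : ∀ i : Fin (n - 1), Fin ((i : ℕ) + 2)) :
    ((Finset.univ : Finset (∀ i : Fin (n - 1), Fin ((i : ℕ) + 2))).filter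
        (fun y => (∑ i : Fin (n - 1), (((x i : ℕ) : ℤ) - ((y i : ℕ) : ℤ)).natAbs) ≤ D)).card
      ≤ 2 ^ (min n D) * Nat.choose (n + D) D :=
  invVec_ball_bound_general n D x
end

section
/- Let G be a geometric random variable on {0,1,2,...} with P(G = j) = (1−q)q^j (0 < q < 1), and let G_k be G truncated at k, i.e., P(G_k = j) = q^j(1−q)/(1−q^{k+1}) for 0 ≤ j ≤ k. Then the Shannon entropy of G_k equals H_b(q)/(1−q) − H_b(Q_k)/Q_k, where Q_k = 1 − q^{k+1} and H_b is the binary entropy function. -/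
/-! The log-probabilities `j log q + log ((1 - q) / Q_k)` of the truncated geometric law are affine
in `j`, so its entropy is `-(E[G_k] log q + log ((1 - q) / Q_k))`, with the truncated mean
`E[G_k] = q / (1 - q) - (k + 1) q ^ (k + 1) / Q_k`. Since `1 - Q_k = q ^ (k + 1)`, expanding
`H_b(q) / (1 - q)` and `H_b(Q_k) / Q_k` produces exactly these terms. -/

open Finset

/-- Binary entropy (natural log). -/
noncomputable def Hb (p : ℝ) : ℝ := -(p * Real.log p) - (1 - p) * Real.log (1 - p)

open Real

theorem one_sub_sq_mul_sum_range_mul_pow {R : Type*} [CommRing R] (x : R) (n : ℕ) :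
    (1 - x) ^ 2 * ∑ i ∈ range n, (i : R) * x ^ i = x * (1 - x ^ n) - n * x ^ n * (1 - x) := by
  induction n with
  | zero => simp
  | succ n ih =>
    rw [sum_range_succ, mul_add, ih]
    push_cast
    ring

theorem neg_sum_mul_log_eq_of_log_eq_affine {ι : Type*} (s : Finset ι) (p t : ι → ℝ) (a b : ℝ)
    (h : ∀ i ∈ s, log (p i) = t i * a + b) :
    -∑ i ∈ s, p i * log (p i) = -(a * ∑ i ∈ s, t i * p i + b * ∑ i ∈ s, p i) := by
  rw [mul_sum, mul_sum, ← sum_add_distrib]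
  congr 1
  refine sum_congr rfl fun i hi => ?_
  rw [h i hi]
  ring

theorem Hb_div_one_sub {p : ℝ} (hp : p ≠ 1) :
    Hb p / (1 - p) = -(p / (1 - p)) * log p - log (1 - p) := by
  have : 1 - p ≠ 0 := sub_ne_zero.2 hp.symm
  rw [Hb]
  field_simp

theorem Hb_div {p : ℝ} (hp : p ≠ 0) :
    Hb p / p = -log p - ((1 - p) / p) * log (1 - p) := by
  rw [Hb]
  field_simp

noncomputable def truncGeom (q : ℝ) (k j : ℕ) : ℝ := q ^ j * (1 - q) / (1 - q ^ (k + 1))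

section truncGeom

variable {q : ℝ} {k : ℕ}

theorem log_truncGeom (hq0 : q ≠ 0) (hq1 : q ≠ 1) (hqk : q ^ (k + 1) ≠ 1) (j : ℕ) :
    log (truncGeom q k j) = j * log q + (log (1 - q) - log (1 - q ^ (k + 1))) := by
  rw [truncGeom, log_div (mul_ne_zero (pow_ne_zero j hq0) (sub_ne_zero.2 hq1.symm))
    (sub_ne_zero.2 hqk.symm), log_mul (pow_ne_zero j hq0) (sub_ne_zero.2 hq1.symm), log_pow]
  ring

theorem sum_truncGeom (hqk : q ^ (k + 1) ≠ 1) : ∑ j ∈ range (k + 1), truncGeom q k j = 1 := by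
  have hQ : 1 - q ^ (k + 1) ≠ 0 := sub_ne_zero.2 hqk.symm
  simp only [truncGeom, ← sum_div, ← sum_mul, geom_sum_mul_neg, div_self hQ]

theorem sum_mul_truncGeom (hq1 : q ≠ 1) (hqk : q ^ (k + 1) ≠ 1) :
    ∑ j ∈ range (k + 1), (j : ℝ) * truncGeom q k j
      = q / (1 - q) - (k + 1) * q ^ (k + 1) / (1 - q ^ (k + 1)) := by
  have h1 : 1 - q ≠ 0 := sub_ne_zero.2 hq1.symm
  have hQ : 1 - q ^ (k + 1) ≠ 0 := sub_ne_zero.2 hqk.symm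
  have hsum : ∑ j ∈ range (k + 1), (j : ℝ) * q ^ j
      = (q * (1 - q ^ (k + 1)) - (k + 1) * q ^ (k + 1) * (1 - q)) / (1 - q) ^ 2 := by
    rw [eq_div_iff (pow_ne_zero 2 h1), mul_comm, one_sub_sq_mul_sum_range_mul_pow]
    push_cast
    ring
  simp only [truncGeom, mul_div_assoc', ← mul_assoc, ← sum_div, ← sum_mul, hsum]
  field_simp

end truncGeom

/-- Entropy of a geometric random variable truncated at k. -/
theorem truncated_geometric_entropy (q : ℝ) (hq0 : 0 < q) (hq1 : q < 1) (k : ℕ) :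
    -∑ j ∈ Finset.range (k + 1),
        (q ^ j * (1 - q) / (1 - q ^ (k + 1))) *
          Real.log (q ^ j * (1 - q) / (1 - q ^ (k + 1)))
      = Hb q / (1 - q) - Hb (1 - q ^ (k + 1)) / (1 - q ^ (k + 1)) := by
  have hqk : q ^ (k + 1) ≠ 1 := (pow_lt_one₀ hq0.le hq1 (Nat.succ_ne_zero k)).ne
  change -∑ j ∈ range (k + 1), truncGeom q k j * log (truncGeom q k j) = _
  rw [neg_sum_mul_log_eq_of_log_eq_affine _ _ _ _ _
      fun j _ => log_truncGeom hq0.ne' hq1.ne hqk j,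
    sum_mul_truncGeom hq1.ne hqk, sum_truncGeom hqk, Hb_div_one_sub hq1.ne,
    Hb_div (sub_ne_zero.2 hqk.symm), sub_sub_cancel, log_pow]
  push_cast
  ring
end
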